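/- Let A be a set partition of [n] (n ≥ 1) with r blocks that is NOT atomic, i.e., A = B|C for some nonempty set partitions B of [m] and C of [n−m] with 0 < m < n. Then p(A) := ∑_{γ ∈ Γ'(r)} (−1)^{ℓ(γ)−1} γ[A] = 0 in NCSym. -/

import Mathlib

open Finset

/-- `[n] = {1, …, n}` as a finset of naturals. -/
def seg (n : ℕ) : Finset ℕ := Finset.Icc 1 n

/-- A (raw) collection of blocks. -/
abbrev Blocks := Finset (Finset ℕ)

/-- The ground set (union of the blocks). -/
def ground (A : Blocks) : Finset ℕ := A.sup id

/-- `A` is a set partition of the finite set `X`: nonempty pairwise disjoint blocks with union `X`. -/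
def IsPartitionOf (A : Blocks) (X : Finset ℕ) : Prop :=
  (∀ B ∈ A, B.Nonempty) ∧ (A : Set (Finset ℕ)).PairwiseDisjoint id ∧ ground A = X

/-- `A` is a set partition of `[n]`. -/
def IsSP (A : Blocks) (n : ℕ) : Prop := IsPartitionOf A (seg n)

/-- The unique increasing bijection from `X` onto `[#X]`. -/
def stdFun (X : Finset ℕ) (x : ℕ) : ℕ := (X.filter (· < x)).card + 1

/-- Standardization of a collection of blocks. -/
def stdP (A : Blocks) : Blocks := A.image fun B => B.image (stdFun (ground A))

/-- Shift all entries of all blocks up by `k`. -/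
def shiftP (A : Blocks) (k : ℕ) : Blocks := A.image fun B => B.image (· + k)

/-- Concatenation `A | B` of set partitions: shift `B` up by the weight of `A`. -/
def concatP (A B : Blocks) : Blocks := A ∪ shiftP B (ground A).card

/-- The `i`-th block of `A` (1-based), where blocks are ordered by increasing minima. -/
def blockAt (A : Blocks) (i : ℕ) : Finset ℕ :=
  (A.filter fun B => (A.filter fun C => C.min ≤ B.min).card = i).sup id

/-- `A_J` : the subcollection of blocks of `A` indexed by `J`. -/
def subColl (A : Blocks) (J : Finset ℕ) : Blocks := J.image (blockAt A)

/-- `A` is an atomic set partition of `[n]`. -/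
def IsAtomicSP (A : Blocks) (n : ℕ) : Prop :=
  IsSP A n ∧ 1 ≤ n ∧
    ¬ ∃ m B C, 0 < m ∧ m < n ∧ IsSP B m ∧ IsSP C (n - m) ∧ A = concatP B C

/-- Raw set compositions: words whose letters are finsets of naturals. -/
abbrev SComp := List (Finset ℕ)

/-- The union of the letters of a word. -/
def sunion (γ : SComp) : Finset ℕ := γ.foldr (· ∪ ·) ∅

/-- `γ` is a set composition of `K`. -/
def IsSCompOf (γ : SComp) (K : Finset ℕ) : Prop :=
  (∀ B ∈ γ, B.Nonempty) ∧ γ.Pairwise Disjoint ∧ sunion γ = K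

/-- `γ[A] = std(A_{γ₁}) | std(A_{γ₂}) | ⋯ | std(A_{γₛ})`. -/
def applyComp (γ : SComp) (A : Blocks) : Blocks :=
  (γ.map fun g => stdP (subColl A g)).foldr concatP ∅

abbrev NCSym := Blocks →₀ ℚ

/-- The basis element of `NCSym` indexed by a set partition. -/
noncomputable def bas (A : Blocks) : NCSym := Finsupp.single A 1

/-- `p(A) = ∑_{γ ∈ Γ'(r)} (-1)^{ℓ(γ)-1} γ[A]`. -/
noncomputable def pNC (A : Blocks) (r : ℕ) : NCSym :=
  ∑ᶠ γ ∈ {γ : SComp | IsSCompOf γ (seg r) ∧ 1 ∈ γ.headI},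
    ((-1 : ℚ) ^ (γ.length - 1)) • bas (applyComp γ A)

open TensorProduct in
/-- `Δ(A) = ∑_{K ⊔ L = [r]} std(A_K) ⊗ std(A_L)` on a basis element. -/
noncomputable def deltaB (A : Blocks) : NCSym ⊗[ℚ] NCSym :=
  ∑ K ∈ (seg A.card).powerset,
    bas (stdP (subColl A K)) ⊗ₜ[ℚ] bas (stdP (subColl A (seg A.card \ K)))

/-- The coproduct of `NCSym`, extended linearly. -/
noncomputable def Delta : NCSym →ₗ[ℚ] TensorProduct ℚ NCSym NCSym :=
  Finsupp.lsum ℚ fun A => LinearMap.toSpanSingleton ℚ _ (deltaB A)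

/-!
Write `A = B | C` and let `S = [k]`, `k = #B`: the first `k` blocks of `A` (ordered by minima)
are those of `B`, and all their entries lie below the entries of the shifted blocks of `C`.
Hence for every `g`, `std(A_g) = std(A_{g ∩ S}) | std(A_{g \ S})`, so `γ[A]` does not change if
the first letter of `γ` not contained in `S` is split into its parts inside and outside `S`, or,
when that letter is disjoint from `S`, merged into the preceding letter (which lies in `S`).
This toggle (`splitMerge`) is an involution of `Γ'(r)` (`1 ∈ S` keeps `1` in the first letter,
`r ∉ S` makes it act) that changes `ℓ(γ)` by one, so the terms of `p(A)` cancel in pairs.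
-/

lemma Finset.inter_union_sdiff {α : Type*} [DecidableEq α] (s t : Finset α) :
    s ∩ t ∪ s \ t = s :=
  sup_inf_sdiff s t

lemma finsum_mem_eq_zero_of_involution {α M : Type*} [AddCommMonoid M] {s : Set α} {f : α → M}
    (hs : s.Finite) (σ : α → α) (hmaps : Set.MapsTo σ s s) (hinv : ∀ a ∈ s, σ (σ a) = a)
    (hcancel : ∀ a ∈ s, f a + f (σ a) = 0) (hfix : ∀ a ∈ s, σ a ≠ a) :
    ∑ᶠ a ∈ s, f a = 0 := by
  rw [finsum_mem_eq_finite_toFinset_sum f hs]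
  simp only [← Set.Finite.mem_toFinset hs] at hinv hcancel hfix
  exact sum_involution (fun a _ => σ a) hcancel (fun a ha _ => hfix a ha)
    (fun a ha => hs.mem_toFinset.mpr (hmaps (hs.mem_toFinset.mp ha))) hinv

lemma neg_one_pow_sub_one_add_neg_one_pow_sub_one {R : Type*} [Ring R] {i j : ℕ} (hj : j ≠ 0)
    (h : i = j + 1) : (-1 : R) ^ (i - 1) + (-1) ^ (j - 1) = 0 := by
  obtain ⟨j, rfl⟩ := Nat.exists_eq_succ_of_ne_zero hj
  simp [h, pow_succ]

lemma mem_seg {x n : ℕ} : x ∈ seg n ↔ 1 ≤ x ∧ x ≤ n := Finset.mem_Icc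

lemma card_seg (n : ℕ) : (seg n).card = n := by simp [seg]

lemma mem_ground {A : Blocks} {x : ℕ} : x ∈ ground A ↔ ∃ b ∈ A, x ∈ b := by
  simp [ground, Finset.mem_sup]

lemma ground_union (A B : Blocks) : ground (A ∪ B) = ground A ∪ ground B := sup_union

lemma ground_image_image (f : ℕ → ℕ) (A : Blocks) :
    ground (A.image fun b => b.image f) = (ground A).image f := by
  ext y
  simp only [mem_ground, mem_image]
  grind

lemma stdFun_lt_stdFun {X : Finset ℕ} {x y : ℕ} (hx : x ∈ X) (hxy : x < y) :
    stdFun X x < stdFun X y := by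
  have hss : X.filter (· < x) ⊂ X.filter (· < y) :=
    ssubset_iff_of_subset (fun z hz => by grind)
      |>.mpr ⟨x, by simp [hx, hxy], by simp⟩
  simpa [stdFun] using card_lt_card hss

lemma image_stdFun (X : Finset ℕ) : X.image (stdFun X) = seg X.card := by
  have hsub : X.image (stdFun X) ⊆ seg X.card := by
    simp only [subset_iff, mem_image, mem_seg, forall_exists_index, and_imp]
    rintro _ x hx rfl
    have := card_lt_card (filter_ssubset (p := (· < x)).mpr ⟨x, hx, lt_irrefl x⟩)
    simp only [stdFun]
    omega
  have hinj : Set.InjOn (stdFun X) X := fun a ha b hb hab => by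
    by_contra hne
    rcases lt_or_gt_of_ne hne with h | h
    · exact (stdFun_lt_stdFun ha h).ne hab
    · exact (stdFun_lt_stdFun hb h).ne' hab
  exact eq_of_subset_of_card_le hsub (by rw [card_image_of_injOn hinj, card_seg])

lemma ground_stdP (A : Blocks) : ground (stdP A) = seg (ground A).card := by
  rw [stdP, ground_image_image, image_stdFun]

lemma ground_shiftP (A : Blocks) (k : ℕ) :
    ground (shiftP A k) = (ground A).image (· + k) := ground_image_image _ A

lemma shiftP_union (A B : Blocks) (k : ℕ) :
    shiftP (A ∪ B) k = shiftP A k ∪ shiftP B k := image_union _ _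

lemma shiftP_shiftP (A : Blocks) (a b : ℕ) : shiftP (shiftP A b) a = shiftP A (b + a) := by
  simp only [shiftP, image_image]
  congr 1
  ext b
  simp [add_assoc]

lemma mem_shiftP {A : Blocks} {k : ℕ} {s : Finset ℕ} :
    s ∈ shiftP A k ↔ ∃ c ∈ A, c.image (· + k) = s := mem_image

lemma concatP_of_ground_eq_seg {A : Blocks} {a : ℕ} (h : ground A = seg a) (B : Blocks) :
    concatP A B = A ∪ shiftP B a := by
  rw [concatP, h, card_seg]

lemma ground_concatP {A B : Blocks} {a b : ℕ} (hA : ground A = seg a) (hB : ground B = seg b) :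
    ground (concatP A B) = seg (a + b) := by
  ext x
  simp only [concatP_of_ground_eq_seg hA, ground_union, ground_shiftP, hA, hB, mem_union,
    mem_image, mem_seg]
  constructor
  · rintro (h | ⟨y, hy, rfl⟩) <;> omega
  · intro hx
    by_cases hxa : x ≤ a
    · exact .inl ⟨hx.1, hxa⟩
    · exact .inr ⟨x - a, by omega, by omega⟩

lemma concatP_assoc {P Q : Blocks} {a b : ℕ} (hP : ground P = seg a) (hQ : ground Q = seg b)
    (X : Blocks) : concatP (concatP P Q) X = concatP P (concatP Q X) := by
  rw [concatP_of_ground_eq_seg (ground_concatP hP hQ), concatP_of_ground_eq_seg hP,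
    concatP_of_ground_eq_seg hQ, concatP_of_ground_eq_seg hP, shiftP_union, shiftP_shiftP,
    union_assoc, add_comm b a]

lemma stdP_union_of_lt {P Q : Blocks} (hlt : ∀ x ∈ ground P, ∀ y ∈ ground Q, x < y) :
    stdP (P ∪ Q) = concatP (stdP P) (stdP Q) := by
  have hlow : ∀ x ∈ ground P, stdFun (ground P ∪ ground Q) x = stdFun (ground P) x := by
    intro x hx
    have : (ground Q).filter (· < x) = ∅ :=
      filter_eq_empty_iff.mpr fun y hy => not_lt.mpr (hlt x hx y hy).le
    simp only [stdFun, filter_union, this, union_empty]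
  have hhigh : ∀ y ∈ ground Q,
      stdFun (ground P ∪ ground Q) y = stdFun (ground Q) y + (ground P).card := by
    intro y hy
    have hall : (ground P).filter (· < y) = ground P :=
      filter_eq_self.mpr fun x hx => hlt x hx y hy
    have hdisj : Disjoint (ground P) ((ground Q).filter (· < y)) :=
      disjoint_left.mpr fun x hx hx' => (hlt x hx x (mem_filter.mp hx').1).false
    simp only [stdFun, filter_union, hall, card_union_of_disjoint hdisj]
    omega
  rw [concatP, ground_stdP, card_seg, stdP, ground_union, image_union, stdP, stdP, shiftP,
    image_image]
  congr 1
  · refine image_congr fun b hb => image_congr fun x hx => hlow x ?_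
    exact mem_ground.mpr ⟨b, hb, hx⟩
  · refine image_congr fun b hb => ?_
    simp only [Function.comp_apply, image_image]
    exact image_congr fun y hy => hhigh y (mem_ground.mpr ⟨b, hb, hy⟩)

/-- The position of a block in the ordering by minima used by `blockAt`. -/
def blockRank (A : Blocks) (b : Finset ℕ) : ℕ := (A.filter fun c => c.min ≤ b.min).card

lemma one_le_blockRank {A : Blocks} {b : Finset ℕ} (hb : b ∈ A) : 1 ≤ blockRank A b :=
  card_pos.mpr ⟨b, mem_filter.mpr ⟨hb, le_rfl⟩⟩

lemma exists_blockRank_of_mem_ground_subColl {A : Blocks} {J : Finset ℕ} {x : ℕ}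
    (hx : x ∈ ground (subColl A J)) : ∃ b ∈ A, blockRank A b ∈ J ∧ x ∈ b := by
  simp only [subColl, mem_ground, mem_image] at hx
  obtain ⟨_, ⟨i, hiJ, rfl⟩, hxi⟩ := hx
  simp only [blockAt, mem_sup, mem_filter, id] at hxi
  obtain ⟨b, ⟨hbA, hbi⟩, hxb⟩ := hxi
  exact ⟨b, hbA, by rwa [blockRank, hbi], hxb⟩

lemma IsSP.nonempty {A : Blocks} {n : ℕ} (hA : IsSP A n) (hn : 0 < n) : A.Nonempty := by
  obtain ⟨b, hb, -⟩ := mem_ground.mp (hA.2.2 ▸ mem_seg.mpr ⟨le_rfl, hn⟩ : 1 ∈ ground A)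
  exact ⟨b, hb⟩

section SplitConcatenation

variable {B C : Blocks} {m q : ℕ}

lemma min_lt_min_image_add (hB : IsSP B m) (hC : IsSP C q) {b c : Finset ℕ} (hb : b ∈ B)
    (hc : c ∈ C) : b.min < (c.image (· + m)).min := by
  obtain ⟨x, hx⟩ := hB.1 b hb
  have hxm : x ≤ m := (mem_seg.mp (hB.2.2 ▸ mem_ground.mpr ⟨b, hb, hx⟩)).2
  have hcm : WithTop.some (m + 1) ≤ (c.image (· + m)).min := by
    refine Finset.le_min fun y hy => ?_
    obtain ⟨z, hz, rfl⟩ := mem_image.mp hy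
    have := (mem_seg.mp (hC.2.2 ▸ mem_ground.mpr ⟨c, hc, hz⟩)).1
    exact WithTop.coe_le_coe.mpr (by omega)
  calc b.min ≤ WithTop.some x := min_le hx
    _ < WithTop.some (m + 1) := WithTop.coe_lt_coe.mpr (by omega)
    _ ≤ _ := hcm

lemma le_iff_blockRank_concatP_le (hB : IsSP B m) (hC : IsSP C q) {b : Finset ℕ}
    (hb : b ∈ concatP B C) {x : ℕ} (hx : x ∈ b) :
    x ≤ m ↔ blockRank (concatP B C) b ≤ B.card := by
  rw [concatP_of_ground_eq_seg hB.2.2] at hb ⊢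
  rcases mem_union.mp hb with hbB | hbC
  · have hxm : x ≤ m := (mem_seg.mp (hB.2.2 ▸ mem_ground.mpr ⟨b, hbB, hx⟩)).2
    refine iff_of_true hxm (card_le_card fun c hc => ?_)
    obtain ⟨hc, hcb⟩ := mem_filter.mp hc
    refine (mem_union.mp hc).resolve_right fun hcC => ?_
    obtain ⟨c', hc', rfl⟩ := mem_shiftP.mp hcC
    exact (min_lt_min_image_add hB hC hbB hc').not_ge hcb
  · obtain ⟨c, hc, rfl⟩ := mem_shiftP.mp hbC
    obtain ⟨z, hz, rfl⟩ := mem_image.mp hx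
    have := (mem_seg.mp (hC.2.2 ▸ mem_ground.mpr ⟨c, hc, hz⟩)).1
    refine iff_of_false (by omega) (not_le.mpr ?_)
    have hnew : c.image (· + m) ∉ B := fun h => (min_lt_min_image_add hB hC h hc).false
    rw [Nat.lt_iff_add_one_le, ← card_insert_of_notMem hnew]
    refine card_le_card (insert_subset (mem_filter.mpr ⟨mem_union_right _ hbC, le_rfl⟩) ?_)
    exact fun b' hb' =>
      mem_filter.mpr ⟨mem_union_left _ hb', (min_lt_min_image_add hB hC hb' hc).le⟩

lemma card_concatP (hB : IsSP B m) (hC : IsSP C q) :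
    (concatP B C).card = B.card + C.card := by
  have hdisj : Disjoint B (shiftP C m) := disjoint_right.mpr fun s hs hsB => by
    obtain ⟨c, hc, rfl⟩ := mem_shiftP.mp hs
    exact (min_lt_min_image_add hB hC hsB hc).false
  rw [concatP_of_ground_eq_seg hB.2.2, card_union_of_disjoint hdisj, shiftP,
    card_image_of_injective _ (image_injective (add_left_injective m))]

lemma stdP_subColl_concatP (hB : IsSP B m) (hC : IsSP C q) (g : Finset ℕ) :
    stdP (subColl (concatP B C) g) =
      concatP (stdP (subColl (concatP B C) (g ∩ seg B.card)))
        (stdP (subColl (concatP B C) (g \ seg B.card))) := by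
  have hunion : subColl (concatP B C) g =
      subColl (concatP B C) (g ∩ seg B.card) ∪ subColl (concatP B C) (g \ seg B.card) := by
    rw [subColl, subColl, subColl, ← image_union, union_comm, sdiff_union_inter]
  rw [hunion]
  refine stdP_union_of_lt fun x hx y hy => ?_
  obtain ⟨b, hb, hbS, hxb⟩ := exists_blockRank_of_mem_ground_subColl hx
  obtain ⟨c, hc, hcS, hyc⟩ := exists_blockRank_of_mem_ground_subColl hy
  have hxm : x ≤ m := (le_iff_blockRank_concatP_le hB hC hb hxb).mpr
    (mem_seg.mp (mem_inter.mp hbS).2).2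
  have hym : ¬ y ≤ m := by
    rw [le_iff_blockRank_concatP_le hB hC hc hyc]
    exact fun h => (mem_sdiff.mp hcS).2 (mem_seg.mpr ⟨one_le_blockRank hc, h⟩)
  omega

end SplitConcatenation

lemma sunion_cons (a : Finset ℕ) (γ : SComp) : sunion (a :: γ) = a ∪ sunion γ := rfl

lemma mem_sunion {γ : SComp} {x : ℕ} : x ∈ sunion γ ↔ ∃ a ∈ γ, x ∈ a := by
  induction γ with
  | nil => simp [sunion]
  | cons b γ ih => simp [sunion_cons, ih]

lemma subset_sunion {γ : SComp} {a : Finset ℕ} (ha : a ∈ γ) : a ⊆ sunion γ :=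
  fun _ hx => mem_sunion.mpr ⟨a, ha, hx⟩

lemma disjoint_sunion_right {a : Finset ℕ} {γ : SComp} :
    Disjoint a (sunion γ) ↔ ∀ b ∈ γ, Disjoint a b := by
  simp only [disjoint_left, mem_sunion]
  grind

lemma IsSCompOf.length_le {γ : SComp} {K : Finset ℕ} (hγ : IsSCompOf γ K) :
    γ.length ≤ K.powerset.card := by
  obtain ⟨hne, hdisj, hK⟩ := hγ
  have hnodup : γ.Nodup := by
    refine hdisj.imp_of_mem fun ha _ hab heq => ?_
    subst heq
    exact (hne _ ha).ne_empty (disjoint_self.mp hab)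
  rw [← List.toFinset_card_of_nodup hnodup]
  exact card_le_card fun a ha => mem_powerset.mpr (hK ▸ subset_sunion (List.mem_toFinset.mp ha))

lemma finite_setOf_isSCompOf (K : Finset ℕ) : {γ : SComp | IsSCompOf γ K}.Finite := by
  refine ((List.finite_length_le K.powerset K.powerset.card).image
    (List.map Subtype.val)).subset fun γ hγ => ?_
  have hmem : ∀ a ∈ γ, a ∈ K.powerset := fun a ha =>
    mem_powerset.mpr (hγ.2.2 ▸ subset_sunion ha)
  refine ⟨γ.pmap Subtype.mk hmem, ?_, ?_⟩
  · simpa using hγ.length_le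
  · simp [List.map_pmap]

section SplitMerge

variable (S : Finset ℕ)

def splitMerge : SComp → SComp
  | [] => []
  | a :: γ =>
    if a ⊆ S then
      match γ with
      | [] => [a]
      | b :: γ' => if Disjoint b S then (a ∪ b) :: γ' else a :: splitMerge (b :: γ')
    else (a ∩ S) :: (a \ S) :: γ

variable {S}

lemma union_inter_of_subset_of_disjoint {a b : Finset ℕ} (ha : a ⊆ S) (hb : Disjoint b S) :
    (a ∪ b) ∩ S = a := by
  rw [union_inter_distrib_right, inter_eq_left.mpr ha, disjoint_iff_inter_eq_empty.mp hb,
    union_empty]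

lemma union_sdiff_of_subset_of_disjoint {a b : Finset ℕ} (ha : a ⊆ S) (hb : Disjoint b S) :
    (a ∪ b) \ S = b := by
  rw [union_sdiff_distrib, sdiff_eq_empty_iff_subset.mpr ha, empty_union,
    Finset.sdiff_eq_self_iff_disjoint.mpr hb]

lemma sunion_splitMerge (γ : SComp) : sunion (splitMerge S γ) = sunion γ := by
  fun_induction splitMerge S γ <;> simp_all [sunion_cons, ← union_assoc, inter_union_sdiff]

lemma headI_inter_subset_headI_splitMerge (γ : SComp) :
    γ.headI ∩ S ⊆ (splitMerge S γ).headI := by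
  fun_induction splitMerge S γ
  case case3 => exact inter_subset_left.trans subset_union_left
  all_goals simp_all [inter_subset_left]

lemma length_splitMerge {γ : SComp} (h : ∃ a ∈ γ, ¬ a ⊆ S) :
    (splitMerge S γ).length = γ.length + 1 ∨ γ.length = (splitMerge S γ).length + 1 := by
  fun_induction splitMerge S γ <;> simp_all

lemma pairwise_disjoint_splitMerge {γ : SComp} (h : γ.Pairwise Disjoint) :
    (splitMerge S γ).Pairwise Disjoint := by
  fun_induction splitMerge S γ with
  | case1 | case2 => exact h
  | case3 a _ b γ _ =>
    simp only [List.pairwise_cons, List.mem_cons, forall_eq_or_imp, disjoint_union_left] at h ⊢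
    exact ⟨fun c hc => ⟨h.1.2 c hc, h.2.1 c hc⟩, h.2.2⟩
  | case4 a _ b γ _ ih =>
    rw [List.pairwise_cons] at h ⊢
    refine ⟨fun c hc => (disjoint_sunion_right.mpr h.1).mono_right ?_, ih h.2⟩
    exact sunion_splitMerge (S := S) (b :: γ) ▸ subset_sunion hc
  | case5 a γ _ =>
    rw [List.pairwise_cons] at h
    refine List.pairwise_cons.mpr ⟨?_, List.pairwise_cons.mpr
      ⟨fun c hc => (h.1 c hc).mono_left sdiff_subset, h.2⟩⟩
    rintro c (_ | ⟨_, hc⟩)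
    · exact disjoint_sdiff.mono_left inter_subset_right
    · exact (h.1 c hc).mono_left inter_subset_left

lemma nonempty_of_mem_splitMerge {γ : SComp} (hne : ∀ a ∈ γ, a.Nonempty)
    (hhead : (γ.headI ∩ S).Nonempty) : ∀ a ∈ splitMerge S γ, a.Nonempty := by
  fun_induction splitMerge S γ with
  | case1 | case2 => exact hne
  | case3 a _ b γ _ =>
    simp only [List.mem_cons, forall_eq_or_imp] at hne ⊢
    exact ⟨hne.1.mono subset_union_left, hne.2.2⟩
  | case4 a _ b γ hbS ih =>
    simp only [List.mem_cons, forall_eq_or_imp] at hne ⊢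
    refine ⟨hne.1, ih (by simpa using hne.2) ?_⟩
    simpa [not_disjoint_iff_nonempty_inter] using hbS
  | case5 a γ haS =>
    simp only [List.mem_cons, forall_eq_or_imp] at hne ⊢
    exact ⟨by simpa using hhead, sdiff_nonempty.mpr haS, hne.2⟩

lemma splitMerge_splitMerge {γ : SComp} (hne : ∀ a ∈ γ, a.Nonempty) :
    splitMerge S (splitMerge S γ) = γ := by
  fun_induction splitMerge S γ with
  | case1 => rfl
  | case2 a haS => simp [splitMerge, haS]
  | case3 a haS b γ hbS =>
    have hb : ¬ a ∪ b ⊆ S := fun h =>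
      (hne b (by simp)).ne_empty (disjoint_self.mp (hbS.mono_right (subset_union_right.trans h)))
    cases γ <;> simp [splitMerge, hb, union_inter_of_subset_of_disjoint haS hbS,
      union_sdiff_of_subset_of_disjoint haS hbS]
  | case4 a haS b γ hbS ih =>
    obtain ⟨x, hxb, hxS⟩ := not_disjoint_iff.mp hbS
    have hx : x ∈ (splitMerge S (b :: γ)).headI :=
      headI_inter_subset_headI_splitMerge (b :: γ) (mem_inter.mpr ⟨hxb, hxS⟩)
    obtain ⟨c, δ, hcδ⟩ : ∃ c δ, splitMerge S (b :: γ) = c :: δ := by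
      cases h : splitMerge S (b :: γ) with
      | nil => rw [h] at hx; exact absurd hx (notMem_empty x)
      | cons c δ => exact ⟨c, δ, rfl⟩
    have hcS : ¬ Disjoint c S := not_disjoint_iff.mpr ⟨x, by simpa [hcδ] using hx, hxS⟩
    rw [hcδ, splitMerge, if_pos haS, if_neg hcS, ← hcδ, ih fun c hc => hne c (.tail a hc)]
  | case5 a γ haS =>
    simp [splitMerge, disjoint_sdiff_self_left, inter_union_sdiff]

lemma applyComp_cons (a : Finset ℕ) (γ : SComp) (A : Blocks) :
    applyComp (a :: γ) A = concatP (stdP (subColl A a)) (applyComp γ A) := rfl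

lemma applyComp_splitMerge {A : Blocks}
    (hsplit : ∀ g, stdP (subColl A g) =
      concatP (stdP (subColl A (g ∩ S))) (stdP (subColl A (g \ S))))
    (γ : SComp) : applyComp (splitMerge S γ) A = applyComp γ A := by
  have hassoc := fun (g h : Finset ℕ) => concatP_assoc (P := stdP (subColl A g))
    (Q := stdP (subColl A h)) (ground_stdP _) (ground_stdP _)
  fun_induction splitMerge S γ with
  | case1 | case2 => rfl
  | case3 a haS b γ hbS =>
    rw [applyComp_cons, applyComp_cons, applyComp_cons, hsplit,
      union_inter_of_subset_of_disjoint haS hbS, union_sdiff_of_subset_of_disjoint haS hbS, hassoc]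
  | case4 a _ b γ _ ih => rw [applyComp_cons, applyComp_cons, ih]
  | case5 a γ _ =>
    rw [applyComp_cons, applyComp_cons, applyComp_cons, hsplit a, hassoc]

end SplitMerge

section Cancellation

/-- The set `Γ'(r)`. -/
def oneFirstComps (r : ℕ) : Set SComp := {γ | IsSCompOf γ (seg r) ∧ 1 ∈ γ.headI}

variable {k r : ℕ}

lemma IsSCompOf.splitMerge {S K : Finset ℕ} {γ : SComp} (hγ : IsSCompOf γ K)
    (hhead : (γ.headI ∩ S).Nonempty) : IsSCompOf (splitMerge S γ) K :=
  ⟨nonempty_of_mem_splitMerge hγ.1 hhead, pairwise_disjoint_splitMerge hγ.2.1,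
    (sunion_splitMerge γ).trans hγ.2.2⟩

lemma ne_nil_of_mem_oneFirstComps {γ : SComp} (hγ : γ ∈ oneFirstComps r) : γ ≠ [] := by
  rintro rfl
  -- `[].headI` is `default`, i.e. `∅`
  exact notMem_empty 1 hγ.2

lemma mapsTo_splitMerge_oneFirstComps (hk : 1 ≤ k) :
    Set.MapsTo (splitMerge (seg k)) (oneFirstComps r) (oneFirstComps r) := fun γ hγ =>
  have h1 : 1 ∈ γ.headI ∩ seg k := mem_inter.mpr ⟨hγ.2, mem_seg.mpr ⟨le_rfl, hk⟩⟩
  ⟨hγ.1.splitMerge ⟨1, h1⟩, headI_inter_subset_headI_splitMerge γ h1⟩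

lemma length_splitMerge_of_mem_oneFirstComps (hkr : k < r) {γ : SComp}
    (hγ : γ ∈ oneFirstComps r) :
    (splitMerge (seg k) γ).length = γ.length + 1 ∨
      γ.length = (splitMerge (seg k) γ).length + 1 := by
  have hr : r ∈ sunion γ := hγ.1.2.2 ▸ mem_seg.mpr ⟨by omega, le_rfl⟩
  obtain ⟨a, ha, hra⟩ := mem_sunion.mp hr
  refine length_splitMerge ⟨a, ha, fun h => ?_⟩
  have := (mem_seg.mp (h hra)).2
  omega

end Cancellation

theorem ncsym_pA_eq_zero_of_not_atomic_general (n r m : ℕ) (A B C : Blocks)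
    (hr : A.card = r)
    (hm0 : 0 < m) (hmn : m < n) (hB : IsSP B m) (hC : IsSP C (n - m))
    (hsplit : A = concatP B C) :
    pNC A r = 0 := by
  subst hsplit hr
  have hk : 1 ≤ B.card := card_pos.mpr (hB.nonempty hm0)
  have hkr : B.card < (concatP B C).card := by
    rw [card_concatP hB hC]
    exact Nat.lt_add_of_pos_right (card_pos.mpr (hC.nonempty (by omega)))
  refine finsum_mem_eq_zero_of_involution (s := oneFirstComps _)
    ((finite_setOf_isSCompOf _).subset fun γ hγ => hγ.1) (splitMerge (seg B.card))
    (mapsTo_splitMerge_oneFirstComps hk) (fun γ hγ => splitMerge_splitMerge hγ.1.1)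
    (fun γ hγ => ?_) (fun γ hγ hfix => ?_)
  · rw [applyComp_splitMerge (stdP_subColl_concatP hB hC), ← add_smul]
    refine smul_eq_zero_of_left ?_ _
    have hγ' := mapsTo_splitMerge_oneFirstComps hk hγ
    rcases length_splitMerge_of_mem_oneFirstComps hkr hγ with hlen | hlen
    · rw [add_comm]
      exact neg_one_pow_sub_one_add_neg_one_pow_sub_one
        (by simpa using ne_nil_of_mem_oneFirstComps hγ) hlen
    · exact neg_one_pow_sub_one_add_neg_one_pow_sub_one
        (by simpa using ne_nil_of_mem_oneFirstComps hγ') hlen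
  · have hlen := length_splitMerge_of_mem_oneFirstComps hkr hγ
    rw [hfix] at hlen
    omega

/-- If a set partition `A` of `[n]` (`n ≥ 1`) with `r` blocks is not atomic,
i.e. `A = B|C` with `B ⊢ [m]`, `C ⊢ [n-m]` and `0 < m < n`, then `p(A) = 0` in `NCSym`. -/
theorem ncsym_pA_eq_zero_of_not_atomic (n r m : ℕ) (hn : 1 ≤ n) (A B C : Blocks)
    (hA : IsSP A n) (hr : A.card = r)
    (hm0 : 0 < m) (hmn : m < n) (hB : IsSP B m) (hC : IsSP C (n - m))
    (hsplit : A = concatP B C) :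
    pNC A r = 0 :=
  ncsym_pA_eq_zero_of_not_atomic_general n r m A B C hr hm0 hmn hB hC hsplit
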